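/- Let t ≥ 2, let G be a finite connected P_t-free simple graph, and let T be an uncle tree of G rooted at r. Then for every vertex v of G, the path of T from r to v contains at most t − 1 vertices. -/

import Mathlib

variable {V : Type}

/-- `u` is an ancestor of `v` (possibly `u = v`) in the rooted tree given by
the parent function `parent`. -/
def Anc (parent : V → V) (u v : V) : Prop := ∃ k : ℕ, parent^[k] v = u

/-- `u` is an elder sibling of `v`: both are non-root vertices with the same
parent, and `u` precedes `v` in the linear order (given by `rank`) on the
children of their common parent. -/
def Elder (parent : V → V) (rank : V → ℕ) (r u v : V) : Prop :=
  u ≠ r ∧ v ≠ r ∧ u ≠ v ∧ parent u = parent v ∧ rank u < rank v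

/-- An uncle tree of `G` rooted at `r`: a spanning tree of `G` (encoded by a
parent function `parent` fixing the root `r`, with each tree edge `{v, parent v}`
an edge of `G`, and a `depth` function witnessing well-foundedness), together
with a linear order on the children of each vertex (encoded by `rank`, which is
injective on each set of siblings), such that for every edge `uv` of `G` that is
not an edge of the tree, one of `u, v` has an elder sibling that is an ancestor
of the other. -/
structure UncleTree (G : SimpleGraph V) (r : V) where
  parent : V → V
  rank : V → ℕ
  depth : V → ℕ
  parent_root : parent r = r
  adj_parent : ∀ v, v ≠ r → G.Adj v (parent v)
  depth_root : depth r = 0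
  depth_parent : ∀ v, v ≠ r → depth v = depth (parent v) + 1
  rank_injOn : ∀ u v, u ≠ r → v ≠ r → parent u = parent v → rank u = rank v → u = v
  uncle : ∀ u v, G.Adj u v → parent u = v ∨ parent v = u ∨
      (∃ w, Elder parent rank r w u ∧ Anc parent w v) ∨
      (∃ w, Elder parent rank r w v ∧ Anc parent w u)



namespace UncleTree

variable {G : SimpleGraph V} {r : V} (T : UncleTree G r)

lemma depth_eq_zero {v : V} (h : T.depth v = 0) : v = r := by
  by_contra hv
  have := T.depth_parent v hv
  omega

lemma depth_iterate : ∀ (k : ℕ) {v : V}, k ≤ T.depth v →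
    T.depth (T.parent^[k] v) = T.depth v - k := by
  intro k
  induction k with
  | zero => intro v _; simp
  | succ k ih =>
    intro v hk
    rw [Function.iterate_succ_apply']
    have h1 := ih (v := v) (by omega)
    have hne : T.parent^[k] v ≠ r := by
      intro h
      rw [h, T.depth_root] at h1
      omega
    have := T.depth_parent _ hne
    omega

lemma iter_root : ∀ (n : ℕ) (v : V), T.depth v = n → T.parent^[n] v = r := by
  intro n
  induction n with
  | zero => intro v h; simpa using T.depth_eq_zero h
  | succ n ih =>
    intro v h
    have hv : v ≠ r := by
      intro hv; rw [hv, T.depth_root] at h; omega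
    rw [Function.iterate_succ_apply]
    apply ih
    have := T.depth_parent v hv
    omega

lemma iterate_of_ge {v : V} {k : ℕ} (h : T.depth v ≤ k) : T.parent^[k] v = r := by
  have hk : k = (k - T.depth v) + T.depth v := by omega
  rw [hk, Function.iterate_add_apply, T.iter_root (T.depth v) v rfl,
    Function.iterate_fixed T.parent_root]

lemma anc_iff {u v : V} : Anc T.parent u v ↔ ∃ k ≤ T.depth v, T.parent^[k] v = u := by
  constructor
  · rintro ⟨k, hk⟩
    by_cases h : k ≤ T.depth v
    · exact ⟨k, h, hk⟩
    · refine ⟨T.depth v, le_refl _, ?_⟩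
      rw [T.iter_root (T.depth v) v rfl, ← hk, T.iterate_of_ge (by omega)]
  · rintro ⟨k, _, hk⟩; exact ⟨k, hk⟩

lemma not_adj {a b : V} {k : ℕ} (h2 : 2 ≤ k) (hk : k ≤ T.depth b)
    (ha : T.parent^[k] b = a) : ¬ G.Adj a b := by
  intro hadj
  have hda : T.depth a = T.depth b - k := by
    rw [← ha]; exact T.depth_iterate k hk
  have hbr : b ≠ r := by
    intro hb; rw [hb, T.depth_root] at hk; omega
  rcases T.uncle a b hadj with h | h | ⟨w, hw, hanc⟩ | ⟨w, hw, hanc⟩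
  · by_cases har : a = r
    · have : b = r := by rw [← h, har, T.parent_root]
      exact hbr this
    · have := T.depth_parent a har
      rw [h] at this
      omega
  · have := T.depth_parent b hbr
    rw [h] at this
    omega
  · obtain ⟨hwr, har, hwa, hpar, _⟩ := hw
    have hdw : T.depth w = T.depth a := by
      have h1 := T.depth_parent w hwr
      have h2 := T.depth_parent a har
      rw [hpar] at h1; omega
    obtain ⟨m, hm⟩ := hanc
    have hmle : m ≤ T.depth b := by
      by_contra hmgt
      exact hwr (by rw [← hm, T.iterate_of_ge (by omega)])
    have hdm : T.depth w = T.depth b - m := by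
      rw [← hm]; exact T.depth_iterate m hmle
    have hmk : m = k := by omega
    exact hwa (by rw [← hm, hmk, ha])
  · obtain ⟨hwr, hbr2, hwb, hpar, _⟩ := hw
    have hdw : T.depth w = T.depth b := by
      have h1 := T.depth_parent w hwr
      have h2 := T.depth_parent b hbr2
      rw [hpar] at h1; omega
    obtain ⟨m, hm⟩ := hanc
    have hmle : m ≤ T.depth a := by
      by_contra hmgt
      exact hwr (by rw [← hm, T.iterate_of_ge (by omega)])
    have hdm : T.depth w = T.depth a - m := by
      rw [← hm]; exact T.depth_iterate m hmle
    omega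

lemma depth_le {t : ℕ} (ht : 2 ≤ t) (hfree : IsEmpty (SimpleGraph.pathGraph t ↪g G))
    (v : V) : T.depth v ≤ t - 2 := by
  by_contra hlt
  push_neg at hlt
  set n := T.depth v with hn
  have hnt : t - 1 ≤ n := by omega
  set g : Fin t → V := fun i => T.parent^[n - i.val] v with hg
  have hdepth : ∀ i : Fin t, T.depth (g i) = i.val := by
    intro i
    have hi : i.val < t := i.isLt
    have : T.depth (T.parent^[n - i.val] v) = n - (n - i.val) :=
      T.depth_iterate _ (by omega)
    rw [hg]; dsimp only
    omega
  have hinj : Function.Injective g := by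
    intro i j hij
    have : T.depth (g i) = T.depth (g j) := by rw [hij]
    rw [hdepth, hdepth] at this
    exact Fin.ext this
  have hstep : ∀ i j : Fin t, i.val + 1 = j.val → T.parent (g j) = g i := by
    intro i j hij
    have hj : j.val < t := j.isLt
    have h1 : n - i.val = (n - j.val) + 1 := by omega
    rw [hg]; dsimp only
    rw [h1, Function.iterate_succ_apply']
  have hfar : ∀ i j : Fin t, i.val + 2 ≤ j.val → ¬ G.Adj (g i) (g j) := by
    intro i j hij
    have hj : j.val < t := j.isLt
    have h1 : n - i.val = (j.val - i.val) + (n - j.val) := by omega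
    have h2 : g i = T.parent^[j.val - i.val] (g j) := by
      rw [hg]; dsimp only
      rw [h1, Function.iterate_add_apply]
    refine T.not_adj (by omega) ?_ h2.symm
    rw [hdepth j]; omega
  have hadj : ∀ i j : Fin t, G.Adj (g i) (g j) ↔ (SimpleGraph.pathGraph t).Adj i j := by
    intro i j
    rw [SimpleGraph.pathGraph_adj]
    constructor
    · intro h
      by_contra hc
      push_neg at hc
      rcases lt_trichotomy i.val j.val with hlt' | heq | hgt
      · exact hfar i j (by omega) h
      · have hij : i = j := Fin.ext heq
        rw [hij] at h
        exact G.loopless.irrefl _ h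
      · exact hfar j i (by omega) h.symm
    · intro h
      rcases h with h | h
      · have hjr : g j ≠ r := by
          intro hr
          have := hdepth j
          rw [hr, T.depth_root] at this
          omega
        have := T.adj_parent (g j) hjr
        rw [hstep i j h] at this
        exact this.symm
      · have hir : g i ≠ r := by
          intro hr
          have := hdepth i
          rw [hr, T.depth_root] at this
          omega
        have := T.adj_parent (g i) hir
        rw [hstep j i h] at this
        exact this
  exact hfree.elim ⟨⟨g, hinj⟩, fun {a b} => hadj a b⟩

end UncleTree

/-- Let `t ≥ 2`, let `G` be a finite connected `P_t`-free simple
graph, and let `T` be an uncle tree of `G` rooted at `r`. Then for every vertex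
`v` of `G`, the path of `T` from `r` to `v` contains at most `t − 1` vertices. -/
theorem uncleTree_rootPath_short [Fintype V] (G : SimpleGraph V) (hG : G.Connected)
    (t : ℕ) (ht : 2 ≤ t) (hfree : IsEmpty (SimpleGraph.pathGraph t ↪g G))
    (r : V) (T : UncleTree G r) (v : V) :
    {u : V | Anc T.parent u v}.ncard ≤ t - 1 := by
  classical
  have hd := T.depth_le ht hfree v
  have hset : {u : V | Anc T.parent u v} =
      ↑((Finset.range (T.depth v + 1)).image (fun k => T.parent^[k] v)) := by
    ext u
    simp only [Set.mem_setOf_eq, Finset.coe_image, Set.mem_image, Finset.mem_coe,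
      Finset.mem_range]
    constructor
    · intro hanc
      obtain ⟨k, hk, hku⟩ := T.anc_iff.mp hanc
      exact ⟨k, by omega, hku⟩
    · rintro ⟨k, _, hku⟩
      exact ⟨k, hku⟩
  rw [hset, Set.ncard_coe_finset]
  calc ((Finset.range (T.depth v + 1)).image (fun k => T.parent^[k] v)).card
      ≤ (Finset.range (T.depth v + 1)).card := Finset.card_image_le
    _ = T.depth v + 1 := Finset.card_range _
    _ ≤ t - 1 := by omega
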